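/- Let q_u ∈ (0,1], q_uf, q_ub, q_um, q_ur ∈ [0,1] with q_uf + q_ub = 1 and q_um + q_ur = 1, and let T_ud^f, T_ur^f, T_ud^b, T_ur^b, D_r, D_a be real numbers with D_a ≥ 0 and D_r ≥ 0. Set T_u = q_uf·(q_um·T_ud^f + q_ur·T_ur^f) + q_ub·(T_ud^b + T_ur^b) and assume T_u > 0. Suppose real numbers D_fm, D_fr, D_b satisfy the system: D_fm = q_u·T_ud^f + q_u·(1 − T_ud^f)·(1 + q_uf·q_um·D_fm + q_uf·q_ur·(D_a + D_fr) + q_ub·(D_a + D_b)) + (1 − q_u)·(1 + D_fm); D_fr = q_u·T_ur^f·(1 + D_r) + q_u·(1 − T_ur^f)·(1 + q_uf·q_ur·D_fr + q_uf·q_um·(D_a + D_fm) + q_ub·(D_a + D_b)) + (1 − q_u)·(1 + D_fr); D_b = q_u·T_ud^b + q_u·T_ur^b·(1 + D_r) + q_u·(1 − T_ud^b − T_ur^b)·(1 + q_ub·D_b + q_uf·q_um·(D_a + D_fm) + q_uf·q_ur·(D_a + D_fr)) + (1 − q_u)·(1 + D_b). Define D = q_uf·q_um·(D_fm + (1 −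 q_uf·q_um)·D_a) + q_uf·q_ur·(D_fr + (1 − q_uf·q_ur)·D_a) + q_ub·(D_b + (1 − q_ub)·D_a). Then D = (1 + q_u·D_r·(q_uf·q_ur·T_ur^f + q_ub·T_ur^b) + D_a·q_u·C) / (q_u·T_u), where C = 1 + (q_uf·q_um)²·(T_ud^f − T_u − 1) + (q_uf·q_ur)²·(T_ur^f − T_u − 1) + (q_ub)²·(T_ud^b + T_ur^b − T_u − 1). -/

import Mathlib

/-!
Write `pᵢ` for the probability of strategy `i`, `Sᵢ` for its success probability, `Srᵢ` for the
part of it received by the relay and `E = Σ pᵢ Dᵢ`. Since a failed or skipped slot is followed by a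
freshly drawn strategy, which costs the alignment `D_a` unless strategy `i` is drawn again, each
recursive equation reads `Dᵢ = q (Sᵢ + Srᵢ D_r) + q (1 - Sᵢ) (1 + E + (1 - pᵢ) D_a) + (1 - q) (1 + Dᵢ)`.
Averaging these with weights `pᵢ` leaves the linear equation
`q T E = 1 + q D_r Σ pᵢ Srᵢ + q D_a Σ pᵢ (1 - Sᵢ) (1 - pᵢ)` in `E` alone, with `T = Σ pᵢ Sᵢ`,
and `D = E + D_a Σ pᵢ (1 - pᵢ)`.
-/

open Finset

section StrategyMixture

variable {ι : Type*} (s : Finset ι) (p S Sr D : ι → ℝ) (q Dr Da : ℝ)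

theorem mul_sum_success_mul_mean_delay_eq (hp : ∑ i ∈ s, p i = 1)
    (hD : ∀ i ∈ s, D i = q * (S i + Sr i * Dr)
      + q * (1 - S i) * (1 + ∑ j ∈ s, p j * D j + (1 - p i) * Da) + (1 - q) * (1 + D i)) :
    q * (∑ i ∈ s, p i * S i) * ∑ i ∈ s, p i * D i
      = 1 + q * Dr * ∑ i ∈ s, p i * Sr i + q * Da * ∑ i ∈ s, p i * (1 - S i) * (1 - p i) := by
  have hE : ∑ i ∈ s, p i * D i = ∑ i ∈ s, (q * (p i * S i) + q * Dr * (p i * Sr i)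
      + q * (1 + ∑ j ∈ s, p j * D j) * (p i - p i * S i)
      + q * Da * (p i * (1 - S i) * (1 - p i)) + (1 - q) * (p i + p i * D i)) :=
    sum_congr rfl fun i hi => by linear_combination p i * hD i hi
  simp only [sum_add_distrib, sum_sub_distrib, ← mul_sum, hp] at hE
  linear_combination hE

theorem sum_mul_one_sub_mul_one_sub_add_eq (hp : ∑ i ∈ s, p i = 1) :
    ∑ i ∈ s, p i * (1 - S i) * (1 - p i) + (∑ i ∈ s, p i * S i) * ∑ i ∈ s, p i * (1 - p i)
      = 1 + ∑ i ∈ s, p i ^ 2 * (S i - ∑ j ∈ s, p j * S j - 1) := by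
  have hfail : ∑ i ∈ s, p i * (1 - S i) * (1 - p i)
      = ∑ i ∈ s, (p i - p i * S i - p i ^ 2 + p i ^ 2 * S i) :=
    sum_congr rfl fun i _ => by ring
  have hsq : ∑ i ∈ s, p i ^ 2 * (S i - ∑ j ∈ s, p j * S j - 1)
      = ∑ i ∈ s, (p i ^ 2 * S i - (∑ j ∈ s, p j * S j + 1) * p i ^ 2) :=
    sum_congr rfl fun i _ => by ring
  have hvar : ∑ i ∈ s, p i * (1 - p i) = ∑ i ∈ s, (p i - p i ^ 2) :=
    sum_congr rfl fun i _ => by ring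
  rw [hfail, hsq, hvar]
  simp only [sum_add_distrib, sum_sub_distrib, ← mul_sum, hp]
  ring

theorem sum_mul_delay_add_alignment_eq (hp : ∑ i ∈ s, p i = 1)
    (hD : ∀ i ∈ s, D i = q * (S i + Sr i * Dr)
      + q * (1 - S i) * (1 + ∑ j ∈ s, p j * D j + (1 - p i) * Da) + (1 - q) * (1 + D i))
    (hT : q * ∑ i ∈ s, p i * S i ≠ 0) :
    ∑ i ∈ s, p i * (D i + (1 - p i) * Da)
      = (1 + q * Dr * ∑ i ∈ s, p i * Sr i
          + Da * q * (1 + ∑ i ∈ s, p i ^ 2 * (S i - ∑ j ∈ s, p j * S j - 1)))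
        / (q * ∑ i ∈ s, p i * S i) := by
  have hsplit : ∑ i ∈ s, p i * (D i + (1 - p i) * Da)
      = ∑ i ∈ s, p i * D i + Da * ∑ i ∈ s, p i * (1 - p i) := by
    rw [mul_sum, ← sum_add_distrib]
    exact sum_congr rfl fun i _ => by ring
  rw [eq_div_iff hT, hsplit, ← sum_mul_one_sub_mul_one_sub_add_eq s p S hp]
  linear_combination mul_sum_success_mul_mean_delay_eq s p S Sr D q Dr Da hp hD

end StrategyMixture

theorem average_delay_closed_form_general
    (q_u q_uf q_ub q_um q_ur : ℝ)
    (Tudf Turf Tudb Turb D_r D_a D_fm D_fr D_b T_u C D : ℝ)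
    (hqu0 : 0 < q_u)
    (hsum1 : q_uf + q_ub = 1) (hsum2 : q_um + q_ur = 1)
    (hTu : T_u = q_uf * (q_um * Tudf + q_ur * Turf) + q_ub * (Tudb + Turb))
    (hTupos : 0 < T_u)
    (hfm : D_fm = q_u * Tudf
        + q_u * (1 - Tudf) * (1 + q_uf * q_um * D_fm
            + q_uf * q_ur * (D_a + D_fr) + q_ub * (D_a + D_b))
        + (1 - q_u) * (1 + D_fm))
    (hfr : D_fr = q_u * Turf * (1 + D_r)
        + q_u * (1 - Turf) * (1 + q_uf * q_ur * D_fr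
            + q_uf * q_um * (D_a + D_fm) + q_ub * (D_a + D_b))
        + (1 - q_u) * (1 + D_fr))
    (hb : D_b = q_u * Tudb + q_u * Turb * (1 + D_r)
        + q_u * (1 - Tudb - Turb) * (1 + q_ub * D_b
            + q_uf * q_um * (D_a + D_fm) + q_uf * q_ur * (D_a + D_fr))
        + (1 - q_u) * (1 + D_b))
    (hD : D = q_uf * q_um * (D_fm + (1 - q_uf * q_um) * D_a)
        + q_uf * q_ur * (D_fr + (1 - q_uf * q_ur) * D_a)
        + q_ub * (D_b + (1 - q_ub) * D_a))
    (hC : C = 1 + (q_uf * q_um) ^ 2 * (Tudf - T_u - 1)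
        + (q_uf * q_ur) ^ 2 * (Turf - T_u - 1)
        + q_ub ^ 2 * (Tudb + Turb - T_u - 1)) :
    D = (1 + q_u * D_r * (q_uf * q_ur * Turf + q_ub * Turb) + D_a * q_u * C)
          / (q_u * T_u) := by
  have hprob : q_uf * q_um + q_uf * q_ur + q_ub = 1 := by linear_combination hsum1 + q_uf * hsum2
  have hT : q_uf * q_um * Tudf + q_uf * q_ur * Turf + q_ub * (Tudb + Turb) = T_u := by
    rw [hTu]; ring
  -- strategies: directional to the mmAP, directional to the relay, broadcast
  have key := sum_mul_delay_add_alignment_eq univ ![q_uf * q_um, q_uf * q_ur, q_ub]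
    ![Tudf, Turf, Tudb + Turb] ![0, Turf, Turb] ![D_fm, D_fr, D_b] q_u D_r D_a
    (by simpa only [Fin.sum_univ_three, Matrix.cons_val, Matrix.cons_val_zero, Matrix.cons_val_one]
      using hprob)
    (fun i _ => by
      fin_cases i <;>
        simp only [Fin.sum_univ_three, Fin.zero_eta, Fin.mk_one, Fin.reduceFinMk, Matrix.cons_val,
          Matrix.cons_val_zero, Matrix.cons_val_one]
      · linear_combination hfm + q_u * (1 - Tudf) * D_a * hprob
      · linear_combination hfr + q_u * (1 - Turf) * D_a * hprob
      · linear_combination hb + q_u * (1 - Tudb - Turb) * D_a * hprob)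
    (by simpa only [Fin.sum_univ_three, Matrix.cons_val, Matrix.cons_val_zero, Matrix.cons_val_one, hT]
      using (mul_pos hqu0 hTupos).ne')
  simp only [Fin.sum_univ_three, Matrix.cons_val, Matrix.cons_val_zero, Matrix.cons_val_one, hT]
    at key
  rw [hD, hC, key]
  ring

/-- closed-form average delay per packet, constant alignment
duration; eq. (29)–(34) of the paper. If `D_fm, D_fr, D_b` satisfy the
recursive delay equations, then the strategy-averaged delay
`D = Σᵢ P(s=i)·(Dᵢ + (1 − P(s=i))·D_a)` equals
`(1 + q_u·D_r·(q_uf·q_ur·T_ur^f + q_ub·T_ur^b) + D_a·q_u·C)/(q_u·T_u)`. -/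
theorem average_delay_closed_form
    (q_u q_uf q_ub q_um q_ur : ℝ)
    (Tudf Turf Tudb Turb D_r D_a D_fm D_fr D_b T_u C D : ℝ)
    (hqu0 : 0 < q_u) (hqu1 : q_u ≤ 1)
    (huf0 : 0 ≤ q_uf) (huf1 : q_uf ≤ 1)
    (hub0 : 0 ≤ q_ub) (hub1 : q_ub ≤ 1)
    (hum0 : 0 ≤ q_um) (hum1 : q_um ≤ 1)
    (hur0 : 0 ≤ q_ur) (hur1 : q_ur ≤ 1)
    (hsum1 : q_uf + q_ub = 1) (hsum2 : q_um + q_ur = 1)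
    (hDa : 0 ≤ D_a) (hDr : 0 ≤ D_r)
    (hTu : T_u = q_uf * (q_um * Tudf + q_ur * Turf) + q_ub * (Tudb + Turb))
    (hTupos : 0 < T_u)
    (hfm : D_fm = q_u * Tudf
        + q_u * (1 - Tudf) * (1 + q_uf * q_um * D_fm
            + q_uf * q_ur * (D_a + D_fr) + q_ub * (D_a + D_b))
        + (1 - q_u) * (1 + D_fm))
    (hfr : D_fr = q_u * Turf * (1 + D_r)
        + q_u * (1 - Turf) * (1 + q_uf * q_ur * D_fr
            + q_uf * q_um * (D_a + D_fm) + q_ub * (D_a + D_b))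
        + (1 - q_u) * (1 + D_fr))
    (hb : D_b = q_u * Tudb + q_u * Turb * (1 + D_r)
        + q_u * (1 - Tudb - Turb) * (1 + q_ub * D_b
            + q_uf * q_um * (D_a + D_fm) + q_uf * q_ur * (D_a + D_fr))
        + (1 - q_u) * (1 + D_b))
    (hD : D = q_uf * q_um * (D_fm + (1 - q_uf * q_um) * D_a)
        + q_uf * q_ur * (D_fr + (1 - q_uf * q_ur) * D_a)
        + q_ub * (D_b + (1 - q_ub) * D_a))
    (hC : C = 1 + (q_uf * q_um) ^ 2 * (Tudf - T_u - 1)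
        + (q_uf * q_ur) ^ 2 * (Turf - T_u - 1)
        + q_ub ^ 2 * (Tudb + Turb - T_u - 1)) :
    D = (1 + q_u * D_r * (q_uf * q_ur * Turf + q_ub * Turb) + D_a * q_u * C)
          / (q_u * T_u) :=
  average_delay_closed_form_general q_u q_uf q_ub q_um q_ur Tudf Turf Tudb Turb D_r D_a D_fm D_fr
    D_b T_u C D hqu0 hsum1 hsum2 hTu hTupos hfm hfr hb hD hC
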